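/- arXiv:2305.00070 — 5 statements merged into one kernel-verified Lean document; each statement's English description precedes it below -/
import Mathlib

section
/- For any forecast sequence p_{1:T} and outcome sequence y_{1:T} ∈ {0,1}^T, the binned refinement R(p_{1:T}) is upper bounded by the unbinned Brier score plus ε²/4 + ε: R(p_{1:T}) ≤ (1/T)∑_t(y_t − p_t)² + ε²/4 + ε, where the bins have width ε. -/
/-!
Since `y_t ∈ {0,1}`, the refinement term of bin `b` is `N_b ŷ_b (1 - ŷ_b) = ∑ (y_t - ŷ_b)²`, and the
bin mean `ŷ_b` minimises the squared deviation, so this is at most `∑ (y_t - c_b)²` for the bin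
midpoint `c_b`. As `|p_t - c_b| ≤ ε/2` and `|y_t - p_t| ≤ 1`, each `(y_t - c_b)²` exceeds
`(y_t - p_t)²` by at most `ε²/4 + ε`; summing over the bins and dividing by `T` gives the bound.
-/

open scoped Classical

/-- The index of the width-`1/m` bin containing `x` (last bin for `x = 1`). -/
noncomputable def binOf (m : ℕ) (hm : 0 < m) (x : ℝ) : Fin m :=
  ⟨min ⌊x * m⌋₊ (m - 1), lt_of_le_of_lt (min_le_right _ _) (Nat.sub_lt hm one_pos)⟩

/-- Number of forecasts falling in bin `b`. -/
noncomputable def NbBin {T : ℕ} (m : ℕ) (hm : 0 < m) (p : Fin T → ℝ) (b : Fin m) : ℕ :=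
  (Finset.univ.filter (fun t => binOf m hm (p t) = b)).card

/-- Average outcome in bin `b` (0 if the bin is empty). -/
noncomputable def yhatBin {T : ℕ} (m : ℕ) (hm : 0 < m) (p y : Fin T → ℝ) (b : Fin m) : ℝ :=
  if 0 < NbBin m hm p b then
    (∑ t ∈ Finset.univ.filter (fun t => binOf m hm (p t) = b), y t) / (NbBin m hm p b : ℝ)
  else 0

/-- Binned refinement. -/
noncomputable def RefnBin {T : ℕ} (m : ℕ) (hm : 0 < m) (p y : Fin T → ℝ) : ℝ :=
  (1 / (T : ℝ)) * ∑ b : Fin m,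
    (NbBin m hm p b : ℝ) * (yhatBin m hm p y b) * (1 - yhatBin m hm p y b)

namespace Finset

variable {ι : Type*} (S : Finset ι) (y : ι → ℝ)

theorem sum_sq_sub_const (a : ℝ) :
    ∑ t ∈ S, (y t - a) ^ 2 = ∑ t ∈ S, y t ^ 2 - 2 * a * ∑ t ∈ S, y t + #S * a ^ 2 := by
  simp only [sub_sq, sum_add_distrib, sum_sub_distrib, sum_const, nsmul_eq_mul, ← sum_mul,
    ← mul_sum]
  ring

theorem sum_sq_sub_mean_le (c : ℝ) :
    ∑ t ∈ S, (y t - (∑ t ∈ S, y t) / #S) ^ 2 ≤ ∑ t ∈ S, (y t - c) ^ 2 := by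
  rcases S.eq_empty_or_nonempty with rfl | hS
  · simp
  have hn : (0 : ℝ) < #S := by exact_mod_cast hS.card_pos
  rw [sum_sq_sub_const, sum_sq_sub_const, ← sub_nonneg]
  have key : (∑ t ∈ S, y t - #S * c) ^ 2 / #S =
      (∑ t ∈ S, y t ^ 2 - 2 * c * ∑ t ∈ S, y t + #S * c ^ 2) -
        (∑ t ∈ S, y t ^ 2 - 2 * ((∑ t ∈ S, y t) / #S) * ∑ t ∈ S, y t +
          #S * ((∑ t ∈ S, y t) / #S) ^ 2) := by
    field_simp
    ring
  rw [← key]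
  positivity

theorem sum_sq_sub_mean_of_zero_or_one (hy : ∀ t ∈ S, y t = 0 ∨ y t = 1) :
    ∑ t ∈ S, (y t - (∑ t ∈ S, y t) / #S) ^ 2 =
      #S * ((∑ t ∈ S, y t) / #S) * (1 - (∑ t ∈ S, y t) / #S) := by
  have hsq : ∑ t ∈ S, y t ^ 2 = ∑ t ∈ S, y t :=
    sum_congr rfl fun t ht => by rcases hy t ht with h | h <;> simp [h]
  rw [sum_sq_sub_const, hsq]
  rcases S.eq_empty_or_nonempty with rfl | hS
  · simp
  have hn : (#S : ℝ) ≠ 0 := by exact_mod_cast hS.card_pos.ne'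
  field_simp
  ring

end Finset

theorem sq_le_sq_add_of_abs_le {a d δ : ℝ} (ha : |a| ≤ 1) (hd : |d| ≤ δ) :
    (a + d) ^ 2 ≤ a ^ 2 + δ ^ 2 + 2 * δ := by
  have had : a * d ≤ δ :=
    calc a * d ≤ |a| * |d| := abs_mul a d ▸ le_abs_self _
      _ ≤ 1 * δ := mul_le_mul ha hd (abs_nonneg d) zero_le_one
      _ = δ := one_mul δ
  have hd2 : d ^ 2 ≤ δ ^ 2 := sq_le_sq' (abs_le.mp hd).1 (abs_le.mp hd).2
  nlinarith

section Binning

variable {m : ℕ} (hm : 0 < m)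

/-- Midpoint `(b + 1/2) ε` of the bin `B_{b+1} = [b ε, (b + 1) ε)`, where `ε = 1/m`. -/
noncomputable def binMid (b : Fin m) : ℝ := ((b : ℝ) + 1 / 2) / m

theorem binOf_le_mul {x : ℝ} (hx : 0 ≤ x) : ((binOf m hm x : ℕ) : ℝ) ≤ x * m :=
  calc ((binOf m hm x : ℕ) : ℝ) ≤ (⌊x * m⌋₊ : ℝ) := by
        exact_mod_cast min_le_left _ _
    _ ≤ x * m := Nat.floor_le (by positivity)

theorem mul_le_binOf_add_one {x : ℝ} (hx : x ≤ 1) : x * m ≤ (binOf m hm x : ℕ) + 1 := by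
  have hmin : (binOf m hm x : ℕ) + 1 = min (⌊x * m⌋₊ + 1) m := by
    simp only [binOf]
    omega
  rw [← Nat.cast_one, ← Nat.cast_add, hmin, Nat.cast_min, le_min_iff]
  refine ⟨by exact_mod_cast (Nat.lt_floor_add_one (x * m)).le, ?_⟩
  exact mul_le_of_le_one_left (Nat.cast_nonneg m) hx

theorem abs_sub_binMid_le {x : ℝ} (hx : x ∈ Set.Icc (0 : ℝ) 1) :
    |x - binMid (binOf m hm x)| ≤ (m : ℝ)⁻¹ / 2 := by
  have hm' : (0 : ℝ) < m := by exact_mod_cast hm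
  have hlo := binOf_le_mul hm hx.1
  have hhi := mul_le_binOf_add_one hm hx.2
  have hx' : x - binMid (binOf m hm x) = (x * m - (binOf m hm x : ℕ) - 1 / 2) / m := by
    unfold binMid
    field_simp
    ring
  rw [hx', abs_div, abs_of_pos hm', div_le_iff₀ hm', div_mul_eq_mul_div, inv_mul_cancel₀ hm'.ne',
    abs_le]
  constructor <;> linarith

end Binning

section Refinement

variable {T m : ℕ} (hm : 0 < m) (p y : Fin T → ℝ)

theorem yhatBin_eq_div (b : Fin m) :
    yhatBin m hm p y b =
      (∑ t ∈ Finset.univ.filter (fun t => binOf m hm (p t) = b), y t) / NbBin m hm p b := by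
  unfold yhatBin
  split_ifs with hN
  · rfl
  · rw [Nat.eq_zero_of_not_pos hN, Nat.cast_zero, div_zero]

theorem NbBin_mul_yhatBin_le (hp : ∀ t, p t ∈ Set.Icc (0 : ℝ) 1)
    (hy : ∀ t, y t = 0 ∨ y t = 1) (b : Fin m) :
    NbBin m hm p b * yhatBin m hm p y b * (1 - yhatBin m hm p y b) ≤
      ∑ t ∈ Finset.univ.filter (fun t => binOf m hm (p t) = b),
        ((y t - p t) ^ 2 + ((m : ℝ)⁻¹ ^ 2 / 4 + (m : ℝ)⁻¹)) := by
  set S := Finset.univ.filter (fun t => binOf m hm (p t) = b)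
  rw [yhatBin_eq_div, NbBin, ← S.sum_sq_sub_mean_of_zero_or_one y fun t _ => hy t]
  refine (S.sum_sq_sub_mean_le y (binMid b)).trans (Finset.sum_le_sum fun t ht => ?_)
  have hyp : |y t - p t| ≤ 1 := by
    obtain ⟨h0, h1⟩ := hp t
    rcases hy t with h | h <;> rw [h, abs_le] <;> constructor <;> linarith
  have hmid : |p t - binMid b| ≤ (m : ℝ)⁻¹ / 2 := by
    rw [← (Finset.mem_filter.mp ht).2]
    exact abs_sub_binMid_le hm (hp t)
  calc (y t - binMid b) ^ 2 = ((y t - p t) + (p t - binMid b)) ^ 2 := by ring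
    _ ≤ (y t - p t) ^ 2 + ((m : ℝ)⁻¹ / 2) ^ 2 + 2 * ((m : ℝ)⁻¹ / 2) :=
      sq_le_sq_add_of_abs_le hyp hmid
    _ = (y t - p t) ^ 2 + ((m : ℝ)⁻¹ ^ 2 / 4 + (m : ℝ)⁻¹) := by ring

end Refinement

theorem refinement_le_brier_add_general (T m : ℕ) (hm : 0 < m)
    (p y : Fin T → ℝ)
    (hp : ∀ t, p t ∈ Set.Icc (0 : ℝ) 1)
    (hy : ∀ t, y t = 0 ∨ y t = 1) :
    RefnBin m hm p y ≤
      (1 / (T : ℝ)) * ∑ t, (y t - p t) ^ 2 + ((m : ℝ)⁻¹) ^ 2 / 4 + (m : ℝ)⁻¹ := by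
  set K : ℝ := (m : ℝ)⁻¹ ^ 2 / 4 + (m : ℝ)⁻¹
  calc RefnBin m hm p y ≤ (1 / (T : ℝ)) * ∑ t, ((y t - p t) ^ 2 + K) := by
        rw [RefnBin, ← Finset.sum_fiberwise Finset.univ (fun t => binOf m hm (p t))]
        gcongr with b
        exact NbBin_mul_yhatBin_le hm p y hp hy b
    _ = (1 / (T : ℝ)) * ∑ t, (y t - p t) ^ 2 + (T / T : ℝ) * K := by
      rw [Finset.sum_add_distrib, Finset.sum_const, Finset.card_univ, Fintype.card_fin,
        nsmul_eq_mul]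
      ring
    _ ≤ (1 / (T : ℝ)) * ∑ t, (y t - p t) ^ 2 + K := by
      gcongr
      exact mul_le_of_le_one_left (by positivity) (div_self_le_one _)
    _ = _ := by ring

/-- Brier-score–refinement lemma: binned refinement is at most the unbinned
Brier score plus `ε²/4 + ε`, where `ε = 1/m` is the bin width. -/
theorem refinement_le_brier_add (T m : ℕ) (hT : 0 < T) (hm : 0 < m)
    (p y : Fin T → ℝ)
    (hp : ∀ t, p t ∈ Set.Icc (0 : ℝ) 1)
    (hy : ∀ t, y t = 0 ∨ y t = 1) :
    RefnBin m hm p y ≤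
      (1 / (T : ℝ)) * ∑ t, (y t - p t) ^ 2 + ((m : ℝ)⁻¹) ^ 2 / 4 + (m : ℝ)⁻¹ :=
  refinement_le_brier_add_general T m hm p y hp hy
end

section
/- Let 0 < ε ≤ 1, m ∈ [ε, 1], and n_2 < m < n_1 with n_1, n_2 ∈ [0,1]. Define the randomized forecast taking value m − ε/2 with probability (m − n_2)/(n_1 − n_2) and m + ε/2 with probability (n_1 − m)/(n_1 − n_2). Then for y = 1, the expected value of (y − p)² minus the corresponding matched term, i.e. Q := [(m−n_2)/(n_1−n_2)]·[(1−(m−ε/2))² − (1−n_1)²] + [(n_1−m)/(n_1−n_2)]·[(1−(m+ε/2))² − (1−n_2)²], satisfies Q < ε(1−m) + ε²/4 ≤ ε. -/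
/-!
Expanding the squares, the hedged excess equals
`ε²/4 - (m - n₂)(n₁ - m) + (p₊ - p₋) ε (y - m)`, where `p₊, p₋` are the probabilities of
`m ∓ ε/2`: the cross terms of the matched parts cancel against the mixing weights. For `y = 1`
the middle term is negative and `p₊ - p₋ ≤ 1`, while `ε²/4 ≤ ε m` because `m ≥ ε`.
-/

lemma hedging_excess_eq (y ε m n₁ n₂ : ℝ) (h : n₁ ≠ n₂) :
    ((m - n₂) / (n₁ - n₂)) * ((y - (m - ε / 2)) ^ 2 - (y - n₁) ^ 2) +
        ((n₁ - m) / (n₁ - n₂)) * ((y - (m + ε / 2)) ^ 2 - (y - n₂) ^ 2)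
      = -((m - n₂) * (n₁ - m)) + (m - n₂ - (n₁ - m)) / (n₁ - n₂) * (ε * (y - m))
          + ε ^ 2 / 4 := by
  have h' : n₁ - n₂ ≠ 0 := sub_ne_zero.mpr h
  field_simp
  ring

lemma hedging_weight_sub_le_one {m n₁ n₂ : ℝ} (h₁ : m ≤ n₁) (h : n₂ < n₁) :
    (m - n₂ - (n₁ - m)) / (n₁ - n₂) ≤ 1 :=
  (div_le_one (sub_pos.mpr h)).mpr (by linarith)

theorem case2_hedging_y1_general (ε m n₁ n₂ : ℝ) (hε : 0 < ε)
    (hm : m ∈ Set.Icc ε 1)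
    (h₂ : n₂ < m) (h₁ : m < n₁) :
    ((m - n₂) / (n₁ - n₂)) * ((1 - (m - ε / 2)) ^ 2 - (1 - n₁) ^ 2) +
        ((n₁ - m) / (n₁ - n₂)) * ((1 - (m + ε / 2)) ^ 2 - (1 - n₂) ^ 2)
      < ε * (1 - m) + ε ^ 2 / 4 ∧ ε * (1 - m) + ε ^ 2 / 4 ≤ ε := by
  obtain ⟨hεm, hm1⟩ := hm
  rw [hedging_excess_eq 1 ε m n₁ n₂ (h₂.trans h₁).ne']
  have hmatched : 0 < (m - n₂) * (n₁ - m) := mul_pos (sub_pos.mpr h₂) (sub_pos.mpr h₁)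
  have hdrift : (m - n₂ - (n₁ - m)) / (n₁ - n₂) * (ε * (1 - m)) ≤ ε * (1 - m) :=
    mul_le_of_le_one_left (mul_nonneg hε.le (sub_nonneg.mpr hm1))
      (hedging_weight_sub_le_one h₁.le (h₂.trans h₁))
  have hsq : ε ^ 2 / 4 ≤ ε * m := by nlinarith
  constructor <;> linarith

/-- Case-2 hedging bound in the HOPS sharpness proof, for `y = 1`. -/
theorem case2_hedging_y1 (ε m n₁ n₂ : ℝ) (hε : 0 < ε) (hε1 : ε ≤ 1)
    (hm : m ∈ Set.Icc ε 1) (hn₁ : n₁ ∈ Set.Icc (0 : ℝ) 1) (hn₂ : n₂ ∈ Set.Icc (0 : ℝ) 1)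
    (h₂ : n₂ < m) (h₁ : m < n₁) :
    ((m - n₂) / (n₁ - n₂)) * ((1 - (m - ε / 2)) ^ 2 - (1 - n₁) ^ 2) +
        ((n₁ - m) / (n₁ - n₂)) * ((1 - (m + ε / 2)) ^ 2 - (1 - n₂) ^ 2)
      < ε * (1 - m) + ε ^ 2 / 4 ∧ ε * (1 - m) + ε ^ 2 / 4 ≤ ε :=
  case2_hedging_y1_general ε m n₁ n₂ hε hm h₂ h₁
end

section
/- Let 0 < ε ≤ 1, m ∈ [ε, 1−ε], and n_2 < m < n_1 with n_1, n_2 ∈ [0,1]. Then Q := [(m−n_2)/(n_1−n_2)]·[(m−ε/2)² − n_1²] + [(n_1−m)/(n_1−n_2)]·[(m+ε/2)² − n_2²] satisfies Q < εm + ε²/4 ≤ ε. -/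
/-! The two forecasts `m ∓ ε/2` are played with the weights `p, q` of the two-point law on
`{n₁, n₂}` with mean `m`. Since `p n₁² + q n₂² = m² + p q (n₁ - n₂)²`, expanding the squares
leaves the excess loss `ε²/4 + ε m (q - p) - p q (n₁ - n₂)²`, which is below `ε m + ε²/4`
because `q - p < 1`. -/

theorem two_point_second_moment {p q a b : ℝ} (hpq : p + q = 1) :
    p * a ^ 2 + q * b ^ 2 = (p * a + q * b) ^ 2 + p * q * (a - b) ^ 2 := by
  linear_combination (-(p * a ^ 2 + q * b ^ 2)) * hpq

theorem hedge_excess_sq_loss {p q a b m δ : ℝ} (hpq : p + q = 1)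
    (hmean : p * a + q * b = m) :
    p * ((m - δ) ^ 2 - a ^ 2) + q * ((m + δ) ^ 2 - b ^ 2) =
      δ ^ 2 + 2 * δ * m * (q - p) - p * q * (a - b) ^ 2 := by
  have hmoment := two_point_second_moment (a := a) (b := b) hpq
  rw [hmean] at hmoment
  linear_combination (m ^ 2 + δ ^ 2) * hpq - hmoment

theorem hedge_excess_sq_loss_lt {p q a b m δ : ℝ} (hp : 0 < p) (hq : 0 ≤ q)
    (hpq : p + q = 1) (hmean : p * a + q * b = m) (hδ : 0 < δ) (hm : 0 < m) :
    p * ((m - δ) ^ 2 - a ^ 2) + q * ((m + δ) ^ 2 - b ^ 2) < 2 * δ * m + δ ^ 2 := by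
  rw [hedge_excess_sq_loss hpq hmean]
  have hgap : 0 < 2 * δ * m * (1 - (q - p)) := by
    have : 0 < 1 - (q - p) := by linarith
    positivity
  nlinarith [mul_nonneg (mul_nonneg hp.le hq) (sq_nonneg (a - b))]

theorem hedge_weights_sum {m n₁ n₂ : ℝ} (h : n₁ ≠ n₂) :
    (m - n₂) / (n₁ - n₂) + (n₁ - m) / (n₁ - n₂) = 1 := by
  field_simp [sub_ne_zero.mpr h]
  ring

theorem hedge_weights_mean {m n₁ n₂ : ℝ} (h : n₁ ≠ n₂) :
    (m - n₂) / (n₁ - n₂) * n₁ + (n₁ - m) / (n₁ - n₂) * n₂ = m := by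
  field_simp [sub_ne_zero.mpr h]
  ring

theorem case2_hedging_y0_general (ε m n₁ n₂ : ℝ) (hε : 0 < ε)
    (hm : m ∈ Set.Icc ε (1 - ε))
    (h₂ : n₂ < m) (h₁ : m < n₁) :
    ((m - n₂) / (n₁ - n₂)) * ((m - ε / 2) ^ 2 - n₁ ^ 2) +
        ((n₁ - m) / (n₁ - n₂)) * ((m + ε / 2) ^ 2 - n₂ ^ 2)
      < ε * m + ε ^ 2 / 4 ∧ ε * m + ε ^ 2 / 4 ≤ ε := by
  obtain ⟨hεm, hm1⟩ := hm
  have hne : n₁ ≠ n₂ := (h₂.trans h₁).ne'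
  have hgap : 0 < n₁ - n₂ := by linarith
  have hexcess := hedge_excess_sq_loss_lt (div_pos (sub_pos.mpr h₂) hgap)
    (div_nonneg (sub_pos.mpr h₁).le hgap.le) (hedge_weights_sum hne) (hedge_weights_mean hne)
    (half_pos hε) (hε.trans_le hεm)
  refine ⟨by linarith, ?_⟩
  nlinarith [mul_le_mul_of_nonneg_left hm1 hε.le]

/-- Case-2 hedging bound in the HOPS sharpness proof, for `y = 0`. -/
theorem case2_hedging_y0 (ε m n₁ n₂ : ℝ) (hε : 0 < ε) (hε1 : ε ≤ 1)
    (hm : m ∈ Set.Icc ε (1 - ε)) (hn₁ : n₁ ∈ Set.Icc (0 : ℝ) 1) (hn₂ : n₂ ∈ Set.Icc (0 : ℝ) 1)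
    (h₂ : n₂ < m) (h₁ : m < n₁) :
    ((m - n₂) / (n₁ - n₂)) * ((m - ε / 2) ^ 2 - n₁ ^ 2) +
        ((n₁ - m) / (n₁ - n₂)) * ((m + ε / 2) ^ 2 - n₂ ^ 2)
      < ε * m + ε ^ 2 / 4 ∧ ε * m + ε ^ 2 / 4 ≤ ε :=
  case2_hedging_y0_general ε m n₁ n₂ hε hm h₂ h₁
end

section
/- The logistic loss is exp-concave with constant e^{−B} on the ball of radius B with unit-norm features: for |u| ≤ B (where u = θᵀx with ‖θ‖ ≤ B, ‖x‖ ≤ 1) and y ∈ {0,1}, the function u ↦ exp(−e^{−B}·[log(1+e^u) − yu]) is concave in u on [−B, B]. -/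
/-!
Writing `ℓ` for the loss, `(exp (-η ℓ))'' = η exp (-η ℓ) (η ℓ'² - ℓ'')`, so `exp (-η ℓ)` is
concave as soon as `η ℓ'² ≤ ℓ''`. For the logistic loss `ℓ' = σ - y` and `ℓ'' = σ (1 - σ)`.
Since `1 - σ(u) = e^{-u} σ(u)`, on `[-B, B]` we have `e^{-B} σ ≤ 1 - σ` and `e^{-B} (1 - σ) ≤ σ`,
and `(σ - y)²` lies below the chord `(1 - y) σ² + y (1 - σ)²` for `y ∈ [0, 1]`.
-/

open Real

noncomputable def logisticLoss (y u : ℝ) : ℝ := log (1 + exp u) - y * u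

theorem concaveOn_exp_neg_mul_of_mul_sq_deriv_le {s : Set ℝ} (hs : Convex ℝ s)
    {ℓ ℓ' ℓ'' : ℝ → ℝ} {η : ℝ} (hη : 0 ≤ η) (hℓ : ∀ x ∈ s, HasDerivAt ℓ (ℓ' x) x)
    (hℓ' : ∀ x ∈ interior s, HasDerivAt ℓ' (ℓ'' x) x)
    (hle : ∀ x ∈ interior s, η * ℓ' x ^ 2 ≤ ℓ'' x) :
    ConcaveOn ℝ s (fun x => exp (-η * ℓ x)) := by
  have hf' : ∀ x ∈ s, HasDerivAt (fun x => exp (-η * ℓ x)) (exp (-η * ℓ x) * (-η * ℓ' x)) x :=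
    fun x hx => ((hℓ x hx).const_mul (-η)).exp
  refine concaveOn_of_hasDerivWithinAt2_nonpos hs
    (fun x hx => (hf' x hx).continuousAt.continuousWithinAt)
    (fun x hx => (hf' x (interior_subset hx)).hasDerivWithinAt)
    (fun x hx => (((hf' x (interior_subset hx)).mul
      ((hℓ' x hx).const_mul (-η))).hasDerivWithinAt)) fun x hx => ?_
  have hη_le : η * (η * ℓ' x ^ 2) ≤ η * ℓ'' x := mul_le_mul_of_nonneg_left (hle x hx) hη
  have hexp := exp_pos (-η * ℓ x)
  nlinarith

theorem hasDerivAt_log_one_add_exp (x : ℝ) :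
    HasDerivAt (fun u => log (1 + exp u)) (sigmoid x) x := by
  convert ((hasDerivAt_exp x).const_add 1).log (by positivity) using 1
  rw [sigmoid_def, exp_neg]
  field_simp
  ring

theorem hasDerivAt_logisticLoss (y x : ℝ) :
    HasDerivAt (logisticLoss y) (sigmoid x - y) x := by
  have h := (hasDerivAt_log_one_add_exp x).sub ((hasDerivAt_id' x).const_mul y)
  rw [mul_one] at h
  exact h

theorem exp_neg_mul_sigmoid_le_sigmoid_neg {u B : ℝ} (h : u ≤ B) :
    exp (-B) * sigmoid u ≤ sigmoid (-u) := by
  rw [← sigmoid_mul_rexp_neg, mul_comm]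
  exact mul_le_mul_of_nonneg_left (exp_le_exp.mpr (neg_le_neg h)) (sigmoid_nonneg u)

theorem exp_neg_mul_sq_sigmoid_sub_le {u B y : ℝ} (hu : u ∈ Set.Icc (-B) B)
    (hy : y ∈ Set.Icc 0 1) :
    exp (-B) * (sigmoid u - y) ^ 2 ≤ sigmoid u * (1 - sigmoid u) := by
  obtain ⟨hy₀, hy₁⟩ := hy
  have hσ := exp_neg_mul_sigmoid_le_sigmoid_neg hu.2
  have hσ_neg := exp_neg_mul_sigmoid_le_sigmoid_neg (neg_le.mp hu.1)
  rw [sigmoid_neg] at hσ hσ_neg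
  rw [neg_neg] at hσ_neg
  have hchord : (sigmoid u - y) ^ 2 =
      (1 - y) * sigmoid u ^ 2 + y * (1 - sigmoid u) ^ 2 - y * (1 - y) := by
    ring
  have hσ₀ := sigmoid_nonneg u
  have hσ₁ := sigmoid_le_one u
  have hα := exp_pos (-B)
  rw [hchord]
  nlinarith [mul_nonneg hy₀ (sub_nonneg.mpr hy₁),
    mul_le_mul_of_nonneg_left hσ (mul_nonneg (sub_nonneg.mpr hy₁) hσ₀),
    mul_le_mul_of_nonneg_left hσ_neg (mul_nonneg hy₀ (sub_nonneg.mpr hσ₁))]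

theorem logistic_loss_exp_concave_general (B y : ℝ) (hy : y = 0 ∨ y = 1) :
    ConcaveOn ℝ (Set.Icc (-B) B)
      (fun u : ℝ => Real.exp (-(Real.exp (-B)) * (Real.log (1 + Real.exp u) - y * u))) := by
  have hy01 : y ∈ Set.Icc 0 1 := by rcases hy with rfl | rfl <;> norm_num
  exact concaveOn_exp_neg_mul_of_mul_sq_deriv_le (ℓ := logisticLoss y) (convex_Icc _ _)
    (exp_pos _).le (fun x _ => hasDerivAt_logisticLoss y x)
    (fun x _ => (hasDerivAt_sigmoid x).sub_const y)
    (fun x hx => exp_neg_mul_sq_sigmoid_sub_le (interior_subset hx) hy01)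

/-- Exp-concavity of the logistic loss with constant `e^{-B}` on `[-B, B]`:
`u ↦ exp(-e^{-B}·(log(1+e^u) − y·u))` is concave on `[-B, B]`. -/
theorem logistic_loss_exp_concave (B y : ℝ) (hB : 0 < B) (hy : y = 0 ∨ y = 1) :
    ConcaveOn ℝ (Set.Icc (-B) B)
      (fun u : ℝ => Real.exp (-(Real.exp (-B)) * (Real.log (1 + Real.exp u) - y * u))) :=
  logistic_loss_exp_concave_general B y hy
end

section
/- If TOPS forecasts satisfy the Brier-score bound BS(p^TOPS_{1:T}) ≤ R(p^OPS_{1:T}) + (log T + 1)/(ε T), then its binned sharpness satisfies SHP(p^TOPS_{1:T}) ≥ SHP(p^OPS_{1:T}) − ε − ε²/4 − (log T + 1)/(ε T). -/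
open scoped Classical

/-- Binned sharpness. -/
noncomputable def SHPBin {T : ℕ} (m : ℕ) (hm : 0 < m) (p y : Fin T → ℝ) : ℝ :=
  (1 / (T : ℝ)) * ∑ b : Fin m, (NbBin m hm p b : ℝ) * (yhatBin m hm p y b) ^ 2

/-- Brier score. -/
noncomputable def brier {T : ℕ} (p y : Fin T → ℝ) : ℝ :=
  (1 / (T : ℝ)) * ∑ t, (y t - p t) ^ 2

/-- Any point of bin `b` lies in `[b/m, b/m + 1/m]`. -/
lemma binOf_range {m : ℕ} (hm : 0 < m) {x : ℝ} (hx : x ∈ Set.Icc (0 : ℝ) 1)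
    {b : Fin m} (hb : binOf m hm x = b) :
    (b : ℝ) / m ≤ x ∧ x ≤ (b : ℝ) / m + (m : ℝ)⁻¹ := by
  have hmR : (0 : ℝ) < m := Nat.cast_pos.mpr hm
  have hval : min ⌊x * m⌋₊ (m - 1) = (b : ℕ) := congrArg Fin.val hb
  have hx0 : 0 ≤ x := hx.1
  have hx1 : x ≤ 1 := hx.2
  have hxm0 : 0 ≤ x * m := mul_nonneg hx0 hmR.le
  constructor
  · have h1 : (b : ℕ) ≤ ⌊x * m⌋₊ := by rw [← hval]; exact min_le_left _ _
    have h2 : ((b : ℕ) : ℝ) ≤ x * m := (Nat.le_floor_iff hxm0).mp h1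
    rw [div_le_iff₀ hmR]
    exact h2
  · have hub : x * m ≤ (b : ℝ) + 1 := by
      by_cases hc : ⌊x * m⌋₊ ≤ m - 1
      · have hfl : ⌊x * m⌋₊ = (b : ℕ) := by rw [← hval, min_eq_left hc]
        have := Nat.lt_floor_add_one (x * m)
        rw [hfl] at this
        exact_mod_cast this.le
      · have hb' : (b : ℕ) = m - 1 := by rw [← hval, min_eq_right (le_of_not_ge hc)]
        have : x * m ≤ m := by nlinarith
        have hm1 : ((m : ℝ) - 1) + 1 = m := by ring
        have : (b : ℝ) + 1 = (m : ℝ) := by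
          have : ((b : ℕ) : ℝ) = ((m - 1 : ℕ) : ℝ) := congrArg (fun n : ℕ => (n : ℝ)) hb'
          rw [this, Nat.cast_sub hm]
          push_cast
          ring
        linarith [show x * m ≤ (m : ℝ) by nlinarith]
    have : x ≤ ((b : ℝ) + 1) / m := by
      rw [le_div_iff₀ hmR]; exact hub
    calc x ≤ ((b : ℝ) + 1) / m := this
      _ = (b : ℝ) / m + (m : ℝ)⁻¹ := by field_simp

/-- `N_b ŷ_b` equals the sum of outcomes in bin `b`. -/
lemma Nb_mul_yhat {T m : ℕ} (hm : 0 < m) (p y : Fin T → ℝ) (b : Fin m) :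
    (NbBin m hm p b : ℝ) * yhatBin m hm p y b
      = ∑ t ∈ Finset.univ.filter (fun t => binOf m hm (p t) = b), y t := by
  unfold yhatBin
  by_cases h : 0 < NbBin m hm p b
  · rw [if_pos h]
    have hN : (NbBin m hm p b : ℝ) ≠ 0 := Nat.cast_ne_zero.mpr h.ne'
    field_simp
  · rw [if_neg h]
    have hN0 : NbBin m hm p b = 0 := Nat.eq_zero_of_not_pos h
    have : (Finset.univ.filter (fun t => binOf m hm (p t) = b)) = ∅ :=
      Finset.card_eq_zero.mp hN0
    rw [this, Finset.sum_empty, mul_zero]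

lemma yhat_mem {T m : ℕ} (hm : 0 < m) (p y : Fin T → ℝ)
    (hy : ∀ t, y t = 0 ∨ y t = 1) (b : Fin m) :
    yhatBin m hm p y b ∈ Set.Icc (0 : ℝ) 1 := by
  unfold yhatBin
  by_cases h : 0 < NbBin m hm p b
  · rw [if_pos h]
    set S := Finset.univ.filter (fun t => binOf m hm (p t) = b) with hS
    have hN : (0 : ℝ) < (NbBin m hm p b : ℝ) := Nat.cast_pos.mpr h
    have h0 : 0 ≤ ∑ t ∈ S, y t :=
      Finset.sum_nonneg fun t _ => by rcases hy t with h | h <;> simp [h]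
    have h1 : ∑ t ∈ S, y t ≤ (NbBin m hm p b : ℝ) := by
      have : ∑ t ∈ S, y t ≤ ∑ t ∈ S, (1 : ℝ) :=
        Finset.sum_le_sum fun t _ => by rcases hy t with h | h <;> simp [h]
      simpa [NbBin, hS] using this
    constructor
    · positivity
    · rw [div_le_one hN]; exact h1
  · rw [if_neg h]; constructor <;> norm_num

/-- Per-bin Brier-refinement inequality. -/
lemma bin_key {T m : ℕ} (hm : 0 < m) (p y : Fin T → ℝ)
    (hp : ∀ t, p t ∈ Set.Icc (0 : ℝ) 1) (hy : ∀ t, y t = 0 ∨ y t = 1) (b : Fin m) :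
    (NbBin m hm p b : ℝ) * yhatBin m hm p y b * (1 - yhatBin m hm p y b)
      ≤ (∑ t ∈ Finset.univ.filter (fun t => binOf m hm (p t) = b), (y t - p t) ^ 2)
        + (m : ℝ)⁻¹ * (NbBin m hm p b : ℝ) := by
  set S := Finset.univ.filter (fun t => binOf m hm (p t) = b) with hS
  set N : ℝ := (NbBin m hm p b : ℝ) with hNdef
  set q : ℝ := yhatBin m hm p y b with hq
  have hε : (0 : ℝ) < (m : ℝ)⁻¹ := by positivity
  by_cases h : 0 < NbBin m hm p b
  · have hNpos : (0 : ℝ) < N := Nat.cast_pos.mpr h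
    have hsumy : ∑ t ∈ S, y t = N * q := (Nb_mul_yhat hm p y b).symm
    have hqmem := yhat_mem hm p y hy b
    have hq0 : 0 ≤ q := hqmem.1
    have hq1 : q ≤ 1 := hqmem.2
    -- sum of squared deviations equals N q (1-q)
    have hsq : ∑ t ∈ S, (y t - q) ^ 2 = N * q * (1 - q) := by
      have hyy : ∀ t, (y t) ^ 2 = y t := fun t => by
        rcases hy t with h | h <;> simp [h]
      have hcard : (S.card : ℝ) = N := by simp [hNdef, NbBin, hS]
      have hterm2 : ∀ t ∈ S, (y t - q) ^ 2 = y t - 2 * q * y t + q ^ 2 := fun t _ => by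
        rw [sub_sq, hyy t]; ring
      rw [Finset.sum_congr rfl hterm2, Finset.sum_add_distrib, Finset.sum_sub_distrib,
        ← Finset.mul_sum, hsumy, Finset.sum_const, nsmul_eq_mul, hcard]
      ring
    -- sum of absolute deviations equals 2 N q (1 - q)
    have habs : ∑ t ∈ S, |y t - q| = 2 * N * q * (1 - q) := by
      have hterm : ∀ t, |y t - q| = y t * (1 - q) + (1 - y t) * q := fun t => by
        rcases hy t with h | h
        · rw [h]; rw [abs_of_nonpos (by linarith)]; ring
        · rw [h]; rw [abs_of_nonneg (by linarith)]; ring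
      have hcard : (S.card : ℝ) = N := by simp [hNdef, NbBin, hS]
      rw [Finset.sum_congr rfl (fun t _ => hterm t), Finset.sum_add_distrib]
      have e1 : ∑ t ∈ S, y t * (1 - q) = (N * q) * (1 - q) := by
        rw [← Finset.sum_mul, hsumy]
      have e2 : ∑ t ∈ S, (1 - y t) * q = (N - N * q) * q := by
        rw [← Finset.sum_mul, Finset.sum_sub_distrib, hsumy, Finset.sum_const]
        simp [hcard]
      rw [e1, e2]; ring
    set c : ℝ := (b : ℝ) / m with hc
    have hrange : ∀ t ∈ S, c ≤ p t ∧ p t ≤ c + (m : ℝ)⁻¹ := by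
      intro t ht
      have hbt : binOf m hm (p t) = b := (Finset.mem_filter.mp ht).2
      exact binOf_range hm (hp t) hbt
    -- cross term bound
    have hcross : ∑ t ∈ S, (y t - q) * (c - p t) ≥ -((m : ℝ)⁻¹ * (2 * N * q * (1 - q))) := by
      have : ∀ t ∈ S, (y t - q) * (c - p t) ≥ -((m : ℝ)⁻¹ * |y t - q|) := by
        intro t ht
        have h1 : |(y t - q) * (c - p t)| ≤ |y t - q| * (m : ℝ)⁻¹ := by
          rw [abs_mul]
          have : |c - p t| ≤ (m : ℝ)⁻¹ := by
            rcases hrange t ht with ⟨ha, hb2⟩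
            rw [abs_sub_comm, abs_of_nonneg (by linarith)]
            linarith
          exact mul_le_mul_of_nonneg_left this (abs_nonneg _)
        nlinarith [neg_abs_le ((y t - q) * (c - p t))]
      calc ∑ t ∈ S, (y t - q) * (c - p t)
          ≥ ∑ t ∈ S, -((m : ℝ)⁻¹ * |y t - q|) := Finset.sum_le_sum this
        _ = -((m : ℝ)⁻¹ * ∑ t ∈ S, |y t - q|) := by
            rw [Finset.sum_neg_distrib, ← Finset.mul_sum]
        _ = -((m : ℝ)⁻¹ * (2 * N * q * (1 - q))) := by rw [habs]
    -- (y - q)(q - c) sums to zero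
    have hzero : ∑ t ∈ S, (y t - q) * (q - c) = 0 := by
      have hcard : (S.card : ℝ) = N := by simp [hNdef, NbBin, hS]
      have hsub : ∑ t ∈ S, (y t - q) = 0 := by
        rw [Finset.sum_sub_distrib, hsumy, Finset.sum_const, nsmul_eq_mul, hcard]
        ring
      rw [← Finset.sum_mul, hsub, zero_mul]
    -- main decomposition
    have hdecomp : ∑ t ∈ S, (y t - p t) ^ 2
        = (∑ t ∈ S, (y t - q) ^ 2) + 2 * (∑ t ∈ S, (y t - q) * (q - c))
          + 2 * (∑ t ∈ S, (y t - q) * (c - p t)) + ∑ t ∈ S, (q - p t) ^ 2 := by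
      have hterm3 : ∀ t ∈ S, (y t - p t) ^ 2
          = (y t - q) ^ 2 + 2 * ((y t - q) * (q - c)) + 2 * ((y t - q) * (c - p t))
            + (q - p t) ^ 2 := fun t _ => by ring
      rw [Finset.sum_congr rfl hterm3, Finset.sum_add_distrib, Finset.sum_add_distrib,
        Finset.sum_add_distrib, ← Finset.mul_sum, ← Finset.mul_sum]
    have hsqnn : 0 ≤ ∑ t ∈ S, (q - p t) ^ 2 :=
      Finset.sum_nonneg fun t _ => sq_nonneg _
    have hq14 : q * (1 - q) ≤ 1 / 4 := by nlinarith [sq_nonneg (q - 1/2)]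
    have key : ∑ t ∈ S, (y t - p t) ^ 2
        ≥ N * q * (1 - q) - (m : ℝ)⁻¹ * N := by
      rw [hdecomp, hsq, hzero]
      have : -((m : ℝ)⁻¹ * (2 * N * q * (1 - q))) ≥ -((m : ℝ)⁻¹ * N / 2) := by
        have : 2 * N * q * (1 - q) ≤ N / 2 := by nlinarith
        nlinarith
      nlinarith [hcross]
    linarith [key]
  · have hN0 : NbBin m hm p b = 0 := Nat.eq_zero_of_not_pos h
    have hNz : N = 0 := by simp [hNdef, hN0]
    have hsqnn : 0 ≤ ∑ t ∈ S, (y t - p t) ^ 2 :=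
      Finset.sum_nonneg fun t _ => sq_nonneg _
    rw [hNz]
    simp
    linarith

/-- Sum of bin counts is `T`. -/
lemma sum_Nb {T m : ℕ} (hm : 0 < m) (p : Fin T → ℝ) :
    ∑ b : Fin m, (NbBin m hm p b : ℝ) = (T : ℝ) := by
  have : ∑ b : Fin m, NbBin m hm p b = T := by
    unfold NbBin
    have := (Finset.card_eq_sum_card_fiberwise
      (s := (Finset.univ : Finset (Fin T))) (t := (Finset.univ : Finset (Fin m)))
      (f := fun t => binOf m hm (p t)) (fun t _ => Finset.mem_univ _)).symm
    simpa using this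
  exact_mod_cast congrArg (Nat.cast : ℕ → ℝ) this

/-- Sharpness-refinement identity. -/
lemma refn_eq {T m : ℕ} (hm : 0 < m) (p y : Fin T → ℝ) :
    RefnBin m hm p y = (1 / (T : ℝ)) * (∑ t, y t) - SHPBin m hm p y := by
  unfold RefnBin SHPBin
  rw [← mul_sub]
  congr 1
  have hsum : ∑ b : Fin m, (NbBin m hm p b : ℝ) * yhatBin m hm p y b = ∑ t, y t := by
    rw [Finset.sum_congr rfl (fun b _ => Nb_mul_yhat hm p y b)]
    exact Finset.sum_fiberwise_of_maps_to (fun t _ => Finset.mem_univ _) y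
  have hterm : ∀ b : Fin m,
      (NbBin m hm p b : ℝ) * yhatBin m hm p y b * (1 - yhatBin m hm p y b)
        = (NbBin m hm p b : ℝ) * yhatBin m hm p y b
          - (NbBin m hm p b : ℝ) * yhatBin m hm p y b ^ 2 := fun b => by ring
  rw [Finset.sum_congr rfl (fun b _ => hterm b), Finset.sum_sub_distrib, hsum]

/-- If TOPS satisfies the Brier-score bound relative to the refinement of OPS, then
TOPS loses at most `ε + ε²/4 + (log T + 1)/(εT)` of sharpness relative to OPS,
where `ε = 1/m` is the bin width. -/
theorem tops_sharpness_bound (T m : ℕ) (hT : 0 < T) (hm : 0 < m)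
    (pT pO y : Fin T → ℝ)
    (hpT : ∀ t, pT t ∈ Set.Icc (0 : ℝ) 1)
    (hpO : ∀ t, pO t ∈ Set.Icc (0 : ℝ) 1)
    (hy : ∀ t, y t = 0 ∨ y t = 1)
    (hBS : brier pT y ≤ RefnBin m hm pO y + (Real.log T + 1) / ((m : ℝ)⁻¹ * T)) :
    SHPBin m hm pT y ≥ SHPBin m hm pO y - (m : ℝ)⁻¹ - ((m : ℝ)⁻¹) ^ 2 / 4
      - (Real.log T + 1) / ((m : ℝ)⁻¹ * T) := by
  have hTR : (0 : ℝ) < T := Nat.cast_pos.mpr hT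
  have hε2 : (0 : ℝ) ≤ ((m : ℝ)⁻¹) ^ 2 / 4 := by positivity
  -- refinement ≤ brier + ε for pT
  have hRB : RefnBin m hm pT y ≤ brier pT y + (m : ℝ)⁻¹ := by
    unfold RefnBin brier
    have hsum : ∑ b : Fin m,
        (NbBin m hm pT b : ℝ) * yhatBin m hm pT y b * (1 - yhatBin m hm pT y b)
        ≤ (∑ t, (y t - pT t) ^ 2) + (m : ℝ)⁻¹ * T := by
      calc ∑ b : Fin m,
          (NbBin m hm pT b : ℝ) * yhatBin m hm pT y b * (1 - yhatBin m hm pT y b)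
          ≤ ∑ b : Fin m,
            ((∑ t ∈ Finset.univ.filter (fun t => binOf m hm (pT t) = b), (y t - pT t) ^ 2)
              + (m : ℝ)⁻¹ * (NbBin m hm pT b : ℝ)) :=
            Finset.sum_le_sum fun b _ => bin_key hm pT y hpT hy b
        _ = (∑ t, (y t - pT t) ^ 2) + (m : ℝ)⁻¹ * T := by
            rw [Finset.sum_add_distrib,
              Finset.sum_fiberwise_of_maps_to (fun t _ => Finset.mem_univ _)
                (fun t => (y t - pT t) ^ 2),
              ← Finset.mul_sum, sum_Nb hm pT]
    have h1T : (0 : ℝ) < 1 / T := by positivity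
    calc (1 / (T : ℝ)) * ∑ b : Fin m,
        (NbBin m hm pT b : ℝ) * yhatBin m hm pT y b * (1 - yhatBin m hm pT y b)
        ≤ (1 / (T : ℝ)) * ((∑ t, (y t - pT t) ^ 2) + (m : ℝ)⁻¹ * T) := by
          exact mul_le_mul_of_nonneg_left hsum h1T.le
      _ = (1 / (T : ℝ)) * (∑ t, (y t - pT t) ^ 2) + (m : ℝ)⁻¹ := by
          field_simp
  have hT_eq := refn_eq hm pT y
  have hO_eq := refn_eq hm pO y
  linarith [hBS, hRB, hT_eq, hO_eq]
end
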